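/- Let X, A, B be real matrices such that the equation X = A Z B has a solution in Z. Then the optimization problem minimizing ‖Z‖_* subject to X = A Z B has a unique minimizer, which admits a closed form: if A has full column-space SVD data U_A, Σ_A, V_A^T (skinny SVD A = U_A Σ_A V_A^T) and B = U_B Σ_B V_B^T (skinny SVD), then Z* = V_A Σ_A^{-1} U_A^T X V_B Σ_B^{-1} U_B^T, i.e., Z* = A^+ X B^+ where A^+ and B^+ are Moore–Penrose pseudoinverses. -/

import Mathlib

/-!
For every feasible `Z`, the closed form equals `(A⁺ A) Z (B B⁺) = P Z Q` with the orthogonal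
projections `P = V_A V_Aᵀ` and `Q = U_B U_Bᵀ`, and `A (P Z Q) B = A Z B`. Projecting can only
decrease the nuclear norm, strictly unless it changes nothing: if `Cᵀ K = 0` then
`(C + K)ᵀ (C + K) = Cᵀ C + Kᵀ K ≥ Cᵀ C`, the square root is operator monotone, and a positive
semidefinite matrix of trace zero vanishes. Projections on the right reduce to projections on the
left because `‖Mᵀ‖_* = ‖M‖_*`, as `Mᵀ M` and `M Mᵀ` have the same nonzero eigenvalues.
-/

open Matrix

/-- The nuclear norm of a real matrix: the sum of its singular values,
i.e. the sum of the square roots of the eigenvalues of `Mᵀ * M`. -/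
noncomputable def nuclearNorm {m n : Type*} [Fintype m] [Fintype n] [DecidableEq n]
    (M : Matrix m n ℝ) : ℝ :=
  ∑ i, Real.sqrt ((show (Mᵀ * M).IsHermitian by simpa using Matrix.isHermitian_conjTranspose_mul_self M).eigenvalues i)

open scoped MatrixOrder Matrix.Norms.L2Operator ComplexOrder

namespace Matrix

variable {n : Type*} [Fintype n] [DecidableEq n]

lemma IsHermitian.sum_eigenvalues_eq_sum_roots {𝕜 : Type*} [RCLike 𝕜] {S : Matrix n n 𝕜}
    (hS : S.IsHermitian) (f : ℝ → ℝ) :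
    ∑ i, f (hS.eigenvalues i) = ((S.charpoly.roots.map RCLike.re).map f).sum := by
  simp [hS.roots_charpoly_eq_eigenvalues, Multiset.map_map, Finset.sum_map_val]

lemma PosSemidef.trace_sqrt {A : Matrix n n ℂ} (hA : A.PosSemidef) :
    (CFC.sqrt A).trace = ∑ i, (Real.sqrt (hA.1.eigenvalues i) : ℂ) := by
  rw [CFC.sqrt_eq_cfc, cfc_nnreal_eq_real _ A, hA.1.cfc_eq, IsHermitian.cfc,
    Unitary.conjStarAlgAut_apply, trace_mul_cycle, Unitary.coe_star_mul_self, one_mul,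
    trace_diagonal]
  simp [Real.coe_sqrt, hA.eigenvalues_nonneg]

lemma re_trace_sqrt_le_of_le {A B : Matrix n n ℂ} (hAB : A ≤ B) :
    (CFC.sqrt A).trace.re ≤ (CFC.sqrt B).trace.re := by
  have h : (CFC.sqrt B - CFC.sqrt A).PosSemidef := le_iff.mp (CFC.sqrt_le_sqrt A B hAB)
  simpa [trace_sub] using (RCLike.nonneg_iff.mp h.trace_nonneg).1

lemma eq_of_le_of_re_trace_sqrt_eq {A B : Matrix n n ℂ} (hA : 0 ≤ A) (hAB : A ≤ B)
    (htr : (CFC.sqrt A).trace.re = (CFC.sqrt B).trace.re) : A = B := by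
  have h : (CFC.sqrt B - CFC.sqrt A).PosSemidef := le_iff.mp (CFC.sqrt_le_sqrt A B hAB)
  have htr0 : (CFC.sqrt B - CFC.sqrt A).trace = 0 :=
    Complex.ext (by simp [trace_sub, htr]) (RCLike.nonneg_iff.mp h.trace_nonneg).2
  have hsqrt : CFC.sqrt A = CFC.sqrt B := (sub_eq_zero.mp (h.trace_eq_zero_iff.mp htr0)).symm
  rw [← CFC.sqrt_mul_sqrt_self A hA, ← CFC.sqrt_mul_sqrt_self B (hA.trans hAB), hsqrt]

end Matrix

section NuclearNorm

variable {m n : Type*} [Fintype m]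

lemma map_transpose_mul_self (M : Matrix m n ℝ) :
    (Mᵀ * M).map (algebraMap ℝ ℂ) = (M.map (algebraMap ℝ ℂ))ᴴ * M.map (algebraMap ℝ ℂ) := by
  rw [Matrix.map_mul, ← conjTranspose_eq_transpose_of_trivial,
    conjTranspose_map _ (fun x => by simp)]

variable [Fintype n]

lemma posSemidef_map_transpose_mul_self (M : Matrix m n ℝ) :
    ((Mᵀ * M).map (algebraMap ℝ ℂ)).PosSemidef := by
  rw [map_transpose_mul_self]
  exact posSemidef_conjTranspose_mul_self _

variable [DecidableEq n]

section Transpose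

open Polynomial

lemma nuclearNorm_eq_sum_sqrt_roots (M : Matrix m n ℝ) :
    nuclearNorm M = ((Mᵀ * M).charpoly.roots.map Real.sqrt).sum := by
  simp [nuclearNorm, IsHermitian.sum_eigenvalues_eq_sum_roots]

lemma sum_sqrt_roots_X_pow_mul {p : ℝ[X]} (hp : p ≠ 0) (k : ℕ) :
    ((X ^ k * p).roots.map Real.sqrt).sum = (p.roots.map Real.sqrt).sum := by
  simp [roots_mul (mul_ne_zero (pow_ne_zero _ X_ne_zero) hp), Multiset.map_nsmul,
    Multiset.sum_nsmul]

lemma nuclearNorm_transpose [DecidableEq m] (M : Matrix m n ℝ) :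
    nuclearNorm Mᵀ = nuclearNorm M := by
  rw [nuclearNorm_eq_sum_sqrt_roots, nuclearNorm_eq_sum_sqrt_roots, transpose_transpose,
    ← sum_sqrt_roots_X_pow_mul (M * Mᵀ).charpoly_monic.ne_zero (Fintype.card n),
    charpoly_mul_comm', sum_sqrt_roots_X_pow_mul (Mᵀ * M).charpoly_monic.ne_zero]

end Transpose

/-- Real matrices do not form a C⋆-algebra; over `ℂ`, `CFC.sqrt` is operator monotone. -/
lemma nuclearNorm_eq_re_trace_sqrt (M : Matrix m n ℝ) :
    nuclearNorm M = (CFC.sqrt ((Mᵀ * M).map (algebraMap ℝ ℂ))).trace.re := by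
  have hS := posSemidef_map_transpose_mul_self M
  have hM : (Mᵀ * M).IsHermitian := by simpa using isHermitian_conjTranspose_mul_self M
  rw [hS.trace_sqrt, Complex.re_sum]
  simp only [Complex.ofReal_re]
  rw [hS.1.sum_eigenvalues_eq_sum_roots, charpoly_map,
    hM.splits_charpoly.roots_map_of_injective (algebraMap ℝ ℂ).injective,
    nuclearNorm_eq_sum_sqrt_roots]
  simp [Multiset.map_map]

lemma nuclearNorm_le_add_of_transpose_mul_eq_zero {C K : Matrix m n ℝ} (h : Cᵀ * K = 0) :
    nuclearNorm C ≤ nuclearNorm (C + K) ∧ (nuclearNorm (C + K) = nuclearNorm C → K = 0) := by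
  have hgram : (C + K)ᵀ * (C + K) = Cᵀ * C + Kᵀ * K := by
    have h' : Kᵀ * C = 0 := by rw [← transpose_transpose C, ← transpose_mul, h, transpose_zero]
    rw [transpose_add, Matrix.add_mul, Matrix.mul_add, Matrix.mul_add, h, h', add_zero, zero_add]
  have hle : (Cᵀ * C).map (algebraMap ℝ ℂ) ≤ ((C + K)ᵀ * (C + K)).map (algebraMap ℝ ℂ) := by
    rw [hgram, Matrix.map_add _ (map_add _), le_iff, add_sub_cancel_left]
    exact posSemidef_map_transpose_mul_self K
  rw [nuclearNorm_eq_re_trace_sqrt, nuclearNorm_eq_re_trace_sqrt]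
  refine ⟨re_trace_sqrt_le_of_le hle, fun heq => ?_⟩
  have hmap :=
    eq_of_le_of_re_trace_sqrt_eq (posSemidef_map_transpose_mul_self C).nonneg hle heq.symm
  rw [hgram, Matrix.map_add _ (map_add _), left_eq_add,
    ← Matrix.map_zero _ (map_zero (algebraMap ℝ ℂ))] at hmap
  have hKK : Kᴴ * K = 0 := by simpa using map_injective (algebraMap ℝ ℂ).injective hmap
  exact conjTranspose_mul_self_eq_zero.mp hKK

lemma nuclearNorm_proj_mul_le {k : Type*} [Fintype k] [DecidableEq k] {V : Matrix m k ℝ}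
    (hV : Vᵀ * V = 1) (W : Matrix m n ℝ) :
    nuclearNorm (V * Vᵀ * W) ≤ nuclearNorm W ∧
      (nuclearNorm (V * Vᵀ * W) = nuclearNorm W → V * Vᵀ * W = W) := by
  have horth : (V * Vᵀ * W)ᵀ * (W - V * Vᵀ * W) = 0 := by
    simp only [transpose_mul, transpose_transpose, Matrix.mul_sub, Matrix.mul_assoc]
    rw [← Matrix.mul_assoc Vᵀ V, hV, Matrix.one_mul, sub_self]
  obtain ⟨hle, heq⟩ := nuclearNorm_le_add_of_transpose_mul_eq_zero horth
  rw [add_sub_cancel] at hle heq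
  exact ⟨hle, fun h => (sub_eq_zero.mp (heq h.symm)).symm⟩

lemma nuclearNorm_mul_proj_le [DecidableEq m] {k : Type*} [Fintype k] [DecidableEq k]
    {U : Matrix n k ℝ} (hU : Uᵀ * U = 1) (W : Matrix m n ℝ) :
    nuclearNorm (W * (U * Uᵀ)) ≤ nuclearNorm W ∧
      (nuclearNorm (W * (U * Uᵀ)) = nuclearNorm W → W * (U * Uᵀ) = W) := by
  have htr : (W * (U * Uᵀ))ᵀ = U * Uᵀ * Wᵀ := by
    rw [transpose_mul, transpose_mul, transpose_transpose]
  obtain ⟨hle, heq⟩ := nuclearNorm_proj_mul_le hU Wᵀ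
  rw [← htr, nuclearNorm_transpose, nuclearNorm_transpose] at hle heq
  exact ⟨hle, fun h => transpose_injective (htr ▸ heq h)⟩

lemma nuclearNorm_proj_mul_mul_proj_le [DecidableEq m] {k l : Type*} [Fintype k] [Fintype l]
    [DecidableEq k] [DecidableEq l] {V : Matrix m k ℝ} {U : Matrix n l ℝ} (hV : Vᵀ * V = 1)
    (hU : Uᵀ * U = 1) (W : Matrix m n ℝ) :
    nuclearNorm (V * Vᵀ * W * (U * Uᵀ)) ≤ nuclearNorm W ∧
      (nuclearNorm (V * Vᵀ * W * (U * Uᵀ)) = nuclearNorm W → V * Vᵀ * W * (U * Uᵀ) = W) := by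
  obtain ⟨hleV, heqV⟩ := nuclearNorm_proj_mul_le hV (W * (U * Uᵀ))
  obtain ⟨hleU, heqU⟩ := nuclearNorm_mul_proj_le hU W
  simp only [Matrix.mul_assoc] at hleV heqV ⊢
  refine ⟨hleV.trans hleU, fun h => ?_⟩
  have hWU := heqU (le_antisymm hleU (h ▸ hleV))
  rw [heqV (by rw [h, hWU]), hWU]

end NuclearNorm

section SVD

variable {K m p r : Type*} [Field K] [Fintype r] [DecidableEq r]
  {U : Matrix p r K} {σ : r → K} {V : Matrix m r K}

lemma svd_pinv_mul [Fintype p] (hU : Uᵀ * U = 1) (hσ : ∀ i, σ i ≠ 0) :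
    V * (diagonal σ)⁻¹ * Uᵀ * (U * diagonal σ * Vᵀ) = V * Vᵀ := by
  have hinv : (diagonal σ)⁻¹ * diagonal σ = 1 :=
    nonsing_inv_mul _ ((isUnit_iff_isUnit_det _).mp
      (isUnit_diagonal.mpr (Pi.isUnit_iff.mpr fun i => (hσ i).isUnit)))
  simp only [Matrix.mul_assoc]
  rw [← Matrix.mul_assoc Uᵀ, hU, Matrix.one_mul, ← Matrix.mul_assoc _ (diagonal σ), hinv,
    Matrix.one_mul]

lemma svd_mul_pinv [Fintype m] (hV : Vᵀ * V = 1) (hσ : ∀ i, σ i ≠ 0) :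
    U * diagonal σ * Vᵀ * (V * (diagonal σ)⁻¹ * Uᵀ) = U * Uᵀ := by
  have hinv : diagonal σ * (diagonal σ)⁻¹ = 1 :=
    mul_nonsing_inv _ ((isUnit_iff_isUnit_det _).mp
      (isUnit_diagonal.mpr (Pi.isUnit_iff.mpr fun i => (hσ i).isUnit)))
  simp only [Matrix.mul_assoc]
  rw [← Matrix.mul_assoc Vᵀ, hV, Matrix.one_mul, ← Matrix.mul_assoc (diagonal σ), hinv,
    Matrix.one_mul]

lemma svd_mul_proj [Fintype m] (hV : Vᵀ * V = 1) :
    U * diagonal σ * Vᵀ * (V * Vᵀ) = U * diagonal σ * Vᵀ := by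
  rw [← Matrix.mul_assoc, Matrix.mul_assoc _ Vᵀ, hV, Matrix.mul_one]

lemma proj_mul_svd [Fintype p] (hU : Uᵀ * U = 1) :
    U * Uᵀ * (U * diagonal σ * Vᵀ) = U * diagonal σ * Vᵀ := by
  simp only [Matrix.mul_assoc]
  rw [← Matrix.mul_assoc Uᵀ, hU, Matrix.one_mul]

end SVD

theorem stmt_17 {p m n q : Type*} [Fintype p] [Fintype m] [Fintype n] [Fintype q]
    [DecidableEq m] [DecidableEq n] [DecidableEq q] {rA rB : ℕ}
    (X : Matrix p q ℝ) (A : Matrix p m ℝ) (B : Matrix n q ℝ)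
    (hfeas : ∃ Z : Matrix m n ℝ, X = A * Z * B)
    (UA : Matrix p (Fin rA) ℝ) (σA : Fin rA → ℝ) (VA : Matrix m (Fin rA) ℝ)
    (UB : Matrix n (Fin rB) ℝ) (σB : Fin rB → ℝ) (VB : Matrix q (Fin rB) ℝ)
    (hσA : ∀ i, 0 < σA i) (hσB : ∀ i, 0 < σB i)
    (hUA : UAᵀ * UA = 1) (hVA : VAᵀ * VA = 1)
    (hUB : UBᵀ * UB = 1) (hVB : VBᵀ * VB = 1)
    (hA : A = UA * Matrix.diagonal σA * VAᵀ)
    (hB : B = UB * Matrix.diagonal σB * VBᵀ) :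
    X = A * (VA * (Matrix.diagonal σA)⁻¹ * UAᵀ * X * VB * (Matrix.diagonal σB)⁻¹ * UBᵀ) * B ∧
    (∀ Z : Matrix m n ℝ, X = A * Z * B →
      nuclearNorm (VA * (Matrix.diagonal σA)⁻¹ * UAᵀ * X * VB * (Matrix.diagonal σB)⁻¹ * UBᵀ)
        ≤ nuclearNorm Z) ∧
    (∀ Z : Matrix m n ℝ, X = A * Z * B →
      nuclearNorm Z =
        nuclearNorm (VA * (Matrix.diagonal σA)⁻¹ * UAᵀ * X * VB * (Matrix.diagonal σB)⁻¹ * UBᵀ) →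
      Z = VA * (Matrix.diagonal σA)⁻¹ * UAᵀ * X * VB * (Matrix.diagonal σB)⁻¹ * UBᵀ) := by
  have hproj : ∀ Z : Matrix m n ℝ, X = A * Z * B →
      VA * (diagonal σA)⁻¹ * UAᵀ * X * VB * (diagonal σB)⁻¹ * UBᵀ =
        VA * VAᵀ * Z * (UB * UBᵀ) := by
    rintro Z rfl
    rw [← svd_pinv_mul hUA fun i => (hσA i).ne', ← svd_mul_pinv hVB fun i => (hσB i).ne', ← hA,
      ← hB]
    simp only [Matrix.mul_assoc]
  refine ⟨?_, fun Z hZ => ?_, fun Z hZ heq => ?_⟩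
  · obtain ⟨Z, hZ⟩ := hfeas
    calc X = A * (VA * VAᵀ) * Z * (UB * UBᵀ * B) := by
          rw [hZ, hA, hB, svd_mul_proj hVA, proj_mul_svd hUB]
      _ = A * (VA * VAᵀ * Z * (UB * UBᵀ)) * B := by simp only [Matrix.mul_assoc]
      _ = _ := by rw [hproj Z hZ]
  · rw [hproj Z hZ]
    exact (nuclearNorm_proj_mul_mul_proj_le hVA hUB Z).1
  · rw [hproj Z hZ] at heq ⊢
    exact ((nuclearNorm_proj_mul_mul_proj_le hVA hUB Z).2 heq.symm).symm
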